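/- arXiv:1901.08701 — 2 statements merged into one kernel-verified Lean document; each statement's English description precedes it below -/
import Mathlib

section
/- Given three distinct points ω₁, ω₂, ω₃ in ℂ ∪ {∞} that are the roots of a real cubic polynomial, if exactly one root is real then there is a real Möbius transformation S ∈ PGL(2,ℝ) with S(ω₁, ω₂, ω₃) = (0, −i, i) up to ordering, and if all three roots are real then there is a real Möbius transformation mapping them to (0, ∞, 1). -/
open OnePoint Polynomial

/-- A real Möbius transformation acting on the Riemann sphere `ℂ ∪ {∞}`. -/
noncomputable def realMobius (a b c d : ℝ) (z : OnePoint ℂ) : OnePoint ℂ :=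
  match z with
  | OnePoint.infty => if (c : ℂ) = 0 then OnePoint.infty else ((a / c : ℂ) : OnePoint ℂ)
  | (w : ℂ) => if (c : ℂ) * w + d = 0 then OnePoint.infty
      else ((((a : ℂ) * w + b) / ((c : ℂ) * w + d) : ℂ) : OnePoint ℂ)

lemma aux1 (r x y : ℝ) (hy : y ≠ 0) :
    ∃ a b c d : ℝ, a * d - b * c ≠ 0 ∧
      realMobius a b c d ((r : ℂ) : OnePoint ℂ) = ((0 : ℂ) : OnePoint ℂ) ∧
      realMobius a b c d (((x : ℂ) + (y : ℂ) * Complex.I) : OnePoint ℂ) = ((Complex.I : ℂ) : OnePoint ℂ) ∧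
      realMobius a b c d (((x : ℂ) - (y : ℂ) * Complex.I) : OnePoint ℂ) = ((-Complex.I : ℂ) : OnePoint ℂ) := by
  refine ⟨y, -r * y, r - x, y ^ 2 - (r - x) * x, ?_, ?_, ?_, ?_⟩
  · have : y * (y ^ 2 - (r - x) * x) - -r * y * (r - x) = y * (y ^ 2 + (r - x) ^ 2) := by ring
    rw [this]
    positivity
  · have hden : ((r - x : ℝ) : ℂ) * r + ((y ^ 2 - (r - x) * x : ℝ) : ℂ) ≠ 0 := by
      have h1 : ((r - x : ℝ) : ℂ) * r + ((y ^ 2 - (r - x) * x : ℝ) : ℂ)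
          = (((r - x) ^ 2 + y ^ 2 : ℝ) : ℂ) := by push_cast; ring
      rw [h1]
      norm_cast
      positivity
    simp only [realMobius, hden, if_neg, if_false, OnePoint.coe_eq_coe]
    rw [div_eq_iff hden]
    push_cast; ring
  · have hd2 : (y : ℂ) + ((r - x : ℝ) : ℂ) * Complex.I ≠ 0 := by
      intro h
      exact hy (by simpa using congrArg Complex.re h)
    have h1 : ((r - x : ℝ) : ℂ) * ((x : ℂ) + (y : ℂ) * Complex.I) + ((y ^ 2 - (r - x) * x : ℝ) : ℂ)
        = (y : ℂ) * ((y : ℂ) + ((r - x : ℝ) : ℂ) * Complex.I) := by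
      push_cast
      ring
    have hden : ((r - x : ℝ) : ℂ) * ((x : ℂ) + (y : ℂ) * Complex.I) + ((y ^ 2 - (r - x) * x : ℝ) : ℂ) ≠ 0 := by
      rw [h1]
      exact mul_ne_zero (by exact_mod_cast hy) hd2
    simp only [realMobius, hden, if_neg, if_false, OnePoint.coe_eq_coe]
    rw [div_eq_iff hden]
    push_cast
    linear_combination (((x : ℂ) - r) * y) * Complex.I_sq
  · have hd2 : (y : ℂ) - ((r - x : ℝ) : ℂ) * Complex.I ≠ 0 := by
      intro h
      exact hy (by simpa using congrArg Complex.re h)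
    have h1 : ((r - x : ℝ) : ℂ) * ((x : ℂ) - (y : ℂ) * Complex.I) + ((y ^ 2 - (r - x) * x : ℝ) : ℂ)
        = (y : ℂ) * ((y : ℂ) - ((r - x : ℝ) : ℂ) * Complex.I) := by
      push_cast
      ring
    have hden : ((r - x : ℝ) : ℂ) * ((x : ℂ) - (y : ℂ) * Complex.I) + ((y ^ 2 - (r - x) * x : ℝ) : ℂ) ≠ 0 := by
      rw [h1]
      exact mul_ne_zero (by exact_mod_cast hy) hd2
    simp only [realMobius, hden, if_neg, if_false, OnePoint.coe_eq_coe]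
    rw [div_eq_iff hden]
    push_cast
    linear_combination (((x : ℂ) - r) * y) * Complex.I_sq

lemma aux2 (r₁ r₂ r₃ : ℝ) (h12 : r₁ ≠ r₂) (h13 : r₁ ≠ r₃) (h23 : r₂ ≠ r₃) :
    ∃ a b c d : ℝ, a * d - b * c ≠ 0 ∧
      realMobius a b c d ((r₁ : ℂ) : OnePoint ℂ) = ((0 : ℂ) : OnePoint ℂ) ∧
      realMobius a b c d ((r₂ : ℂ) : OnePoint ℂ) = OnePoint.infty ∧
      realMobius a b c d ((r₃ : ℂ) : OnePoint ℂ) = ((1 : ℂ) : OnePoint ℂ) := by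
  refine ⟨r₃ - r₂, -(r₁ * (r₃ - r₂)), r₃ - r₁, -(r₂ * (r₃ - r₁)), ?_, ?_, ?_, ?_⟩
  · have h1 : (r₃ - r₂) * -(r₂ * (r₃ - r₁)) - -(r₁ * (r₃ - r₂)) * (r₃ - r₁)
        = (r₃ - r₂) * (r₃ - r₁) * (r₁ - r₂) := by ring
    rw [h1]
    exact mul_ne_zero (mul_ne_zero (sub_ne_zero.2 h23.symm) (sub_ne_zero.2 h13.symm)) (sub_ne_zero.2 h12)
  · have hden : ((r₃ - r₁ : ℝ) : ℂ) * r₁ + ((-(r₂ * (r₃ - r₁)) : ℝ) : ℂ) ≠ 0 := by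
      have h1 : ((r₃ - r₁ : ℝ) : ℂ) * r₁ + ((-(r₂ * (r₃ - r₁)) : ℝ) : ℂ)
          = (((r₃ - r₁) * (r₁ - r₂) : ℝ) : ℂ) := by push_cast; ring
      rw [h1]
      norm_cast
      exact mul_ne_zero (sub_ne_zero.2 h13.symm) (sub_ne_zero.2 h12)
    simp only [realMobius, hden, if_neg, if_false, OnePoint.coe_eq_coe]
    rw [div_eq_iff hden]
    push_cast; ring
  · have hden : ((r₃ - r₁ : ℝ) : ℂ) * r₂ + ((-(r₂ * (r₃ - r₁)) : ℝ) : ℂ) = 0 := by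
      push_cast; ring
    simp only [realMobius, hden, if_pos]
  · have hden : ((r₃ - r₁ : ℝ) : ℂ) * r₃ + ((-(r₂ * (r₃ - r₁)) : ℝ) : ℂ) ≠ 0 := by
      have h1 : ((r₃ - r₁ : ℝ) : ℂ) * r₃ + ((-(r₂ * (r₃ - r₁)) : ℝ) : ℂ)
          = (((r₃ - r₁) * (r₃ - r₂) : ℝ) : ℂ) := by push_cast; ring
      rw [h1]
      norm_cast
      exact mul_ne_zero (sub_ne_zero.2 h13.symm) (sub_ne_zero.2 h23.symm)
    simp only [realMobius, hden, if_neg, if_false, OnePoint.coe_eq_coe]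
    rw [div_eq_iff hden]
    push_cast; ring


lemma part1_core (r w w' : ℂ) (hr : r.im = 0) (hw : w.im ≠ 0)
    (hw' : w' = (starRingEnd ℂ) w) :
    ∃ a b c d : ℝ, a * d - b * c ≠ 0 ∧
      realMobius a b c d (r : OnePoint ℂ) = ((0 : ℂ) : OnePoint ℂ) ∧
      realMobius a b c d (w : OnePoint ℂ) = ((Complex.I : ℂ) : OnePoint ℂ) ∧
      realMobius a b c d (w' : OnePoint ℂ) = ((-Complex.I : ℂ) : OnePoint ℂ) := by
  obtain ⟨a, b, c, d, hdet, e1, e2, e3⟩ := aux1 r.re w.re w.im hw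
  refine ⟨a, b, c, d, hdet, ?_, ?_, ?_⟩
  · have : ((r.re : ℝ) : ℂ) = r := Complex.ext (by simp) (by simp [hr])
    rwa [this] at e1
  · have : ((w.re : ℝ) : ℂ) + (w.im : ℂ) * Complex.I = w := Complex.re_add_im w
    rwa [this] at e2
  · have : ((w.re : ℝ) : ℂ) - (w.im : ℂ) * Complex.I = w' := by
      rw [hw']
      exact Complex.ext (by simp) (by simp)
    rwa [this] at e3

/-- Given three distinct roots `ω₁, ω₂, ω₃ ∈ ℂ` of a real cubic polynomial:
if exactly one root is real there is a real Möbius transformation carrying them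
(up to ordering) to `(0, −i, i)`; if all three are real, there is one carrying
them to `(0, ∞, 1)`. -/
theorem cubic_roots_mobius_normal_form (p : Polynomial ℝ) (hdeg : p.natDegree = 3)
    (ω₁ ω₂ ω₃ : ℂ) (h12 : ω₁ ≠ ω₂) (h13 : ω₁ ≠ ω₃) (h23 : ω₂ ≠ ω₃)
    (hroots : (p.map (algebraMap ℝ ℂ)).roots = {ω₁, ω₂, ω₃}) :
    ((∃! i : Fin 3, (![ω₁, ω₂, ω₃] i).im = 0) →
      ∃ a b c d : ℝ, a * d - b * c ≠ 0 ∧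
        ({realMobius a b c d ω₁, realMobius a b c d ω₂, realMobius a b c d ω₃}
            : Set (OnePoint ℂ))
          = {((0 : ℂ) : OnePoint ℂ), ((-Complex.I : ℂ) : OnePoint ℂ),
              ((Complex.I : ℂ) : OnePoint ℂ)}) ∧
    ((∀ i : Fin 3, (![ω₁, ω₂, ω₃] i).im = 0) →
      ∃ a b c d : ℝ, a * d - b * c ≠ 0 ∧
        ({realMobius a b c d ω₁, realMobius a b c d ω₂, realMobius a b c d ω₃}
            : Set (OnePoint ℂ))
          = {((0 : ℂ) : OnePoint ℂ), OnePoint.infty, ((1 : ℂ) : OnePoint ℂ)}) := by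
  have hp : p ≠ 0 := fun h => by simp [h] at hdeg
  have hmapne : p.map (algebraMap ℝ ℂ) ≠ 0 :=
    (Polynomial.map_ne_zero_iff (algebraMap ℝ ℂ).injective).2 hp
  have key : ∀ z : ℂ, z ∈ (p.map (algebraMap ℝ ℂ)).roots →
      (starRingEnd ℂ) z ∈ (p.map (algebraMap ℝ ℂ)).roots := by
    intro z hz
    rw [Polynomial.mem_roots hmapne] at hz ⊢
    have h1 : (Polynomial.aeval z) p = 0 := by
      rwa [Polynomial.IsRoot, Polynomial.eval_map, ← Polynomial.aeval_def] at hz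
    have h2 : (Polynomial.aeval ((starRingEnd ℂ) z)) p = 0 := by
      rw [Polynomial.aeval_conj, h1, map_zero]
    rwa [Polynomial.IsRoot, Polynomial.eval_map, ← Polynomial.aeval_def]
  have hc : ∀ z : ℂ, z ∈ ({ω₁, ω₂, ω₃} : Multiset ℂ) →
      (starRingEnd ℂ) z = ω₁ ∨ (starRingEnd ℂ) z = ω₂ ∨ (starRingEnd ℂ) z = ω₃ := by
    intro z hz
    have := key z (by rwa [hroots])
    rw [hroots] at this
    simpa using this
  constructor
  · rintro ⟨i, hi, huniq⟩
    fin_cases i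
    · -- ω₁ real, ω₂ ω₃ nonreal with ω₃ = conj ω₂
      simp only [Matrix.cons_val_zero] at hi
      have h2im : ω₂.im ≠ 0 := fun h => by
        have := huniq 1 (by simpa using h); exact absurd this (by decide)
      have h3im : ω₃.im ≠ 0 := fun h => by
        have := huniq 2 (by simpa using h); exact absurd this (by decide)
      have hcc : (starRingEnd ℂ) ω₂ = ω₃ := by
        rcases hc ω₂ (by simp) with h | h | h
        · have hx : ((starRingEnd ℂ) ω₂).im = 0 := by rw [h]; exact hi
          simp at hx; exact absurd hx h2im
        · exact absurd ((Complex.conj_eq_iff_im).1 h) h2im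
        · exact h
      obtain ⟨a, b, c, d, hdet, e1, e2, e3⟩ := part1_core ω₁ ω₂ ω₃ hi h2im hcc.symm
      refine ⟨a, b, c, d, hdet, ?_⟩
      rw [e1, e2, e3]
      ext z; simp only [Set.mem_insert_iff, Set.mem_singleton_iff]; tauto
    · simp only [Matrix.cons_val_one, Matrix.head_cons] at hi
      have h1im : ω₁.im ≠ 0 := fun h => by
        have := huniq 0 (by simpa using h); exact absurd this (by decide)
      have h3im : ω₃.im ≠ 0 := fun h => by
        have := huniq 2 (by simpa using h); exact absurd this (by decide)
      have hcc : (starRingEnd ℂ) ω₁ = ω₃ := by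
        rcases hc ω₁ (by simp) with h | h | h
        · exact absurd ((Complex.conj_eq_iff_im).1 h) h1im
        · have hx : ((starRingEnd ℂ) ω₁).im = 0 := by rw [h]; exact hi
          simp at hx; exact absurd hx h1im
        · exact h
      obtain ⟨a, b, c, d, hdet, e1, e2, e3⟩ := part1_core ω₂ ω₁ ω₃ hi h1im hcc.symm
      refine ⟨a, b, c, d, hdet, ?_⟩
      rw [e1, e2, e3]
      ext z; simp only [Set.mem_insert_iff, Set.mem_singleton_iff]; tauto
    · simp only [Matrix.cons_val_two, Matrix.tail_cons, Matrix.head_cons] at hi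
      have h1im : ω₁.im ≠ 0 := fun h => by
        have := huniq 0 (by simpa using h); exact absurd this (by decide)
      have h2im : ω₂.im ≠ 0 := fun h => by
        have := huniq 1 (by simpa using h); exact absurd this (by decide)
      have hcc : (starRingEnd ℂ) ω₁ = ω₂ := by
        rcases hc ω₁ (by simp) with h | h | h
        · exact absurd ((Complex.conj_eq_iff_im).1 h) h1im
        · exact h
        · have hx : ((starRingEnd ℂ) ω₁).im = 0 := by rw [h]; exact hi
          simp at hx; exact absurd hx h1im
      obtain ⟨a, b, c, d, hdet, e1, e2, e3⟩ := part1_core ω₃ ω₁ ω₂ hi h1im hcc.symm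
      refine ⟨a, b, c, d, hdet, ?_⟩
      rw [e1, e2, e3]
      ext z; simp only [Set.mem_insert_iff, Set.mem_singleton_iff]; tauto
  · intro hall
    have h1 : ω₁.im = 0 := by simpa using hall 0
    have h2 : ω₂.im = 0 := by simpa using hall 1
    have h3 : ω₃.im = 0 := by simpa using hall 2
    have e1 : ((ω₁.re : ℝ) : ℂ) = ω₁ := Complex.ext (by simp) (by simp [h1])
    have e2 : ((ω₂.re : ℝ) : ℂ) = ω₂ := Complex.ext (by simp) (by simp [h2])
    have e3 : ((ω₃.re : ℝ) : ℂ) = ω₃ := Complex.ext (by simp) (by simp [h3])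
    have d12 : ω₁.re ≠ ω₂.re := fun h => h12 (by rw [← e1, ← e2, h])
    have d13 : ω₁.re ≠ ω₃.re := fun h => h13 (by rw [← e1, ← e3, h])
    have d23 : ω₂.re ≠ ω₃.re := fun h => h23 (by rw [← e2, ← e3, h])
    obtain ⟨a, b, c, d, hdet, f1, f2, f3⟩ := aux2 ω₁.re ω₂.re ω₃.re d12 d13 d23
    rw [e1] at f1; rw [e2] at f2; rw [e3] at f3
    exact ⟨a, b, c, d, hdet, by rw [f1, f2, f3]⟩
end

section
/- The hypergeometric function satisfies the asymptotic expansion ₂F₁(1, 7/6; 3/2; −1/ε²) = 3ε² + (√π·Γ(−1/6)/(2Γ(1/3)))·ε^(7/3) + O(ε⁴) as ε → 0⁺. -/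
/-!
With `x = ε²`, `s = 1/6` and `β = 1/3` the integrand is `t^s (1-t)^(β-1) · x/(t+x)`, and
`t · x/(t+x) = x - x²/(t+x)` splits the integral into `x·B(s,β)` minus `x²` times
`∫₀¹ t^(s-1) (1-t)^(β-1)/(t+x) dt`. Replacing `(1-t)^(β-1)` by `1` and `(0,1)` by `(0,∞)` turns
the latter into the Stieltjes integral `∫₀^∞ t^(s-1)/(t+x) dt = x^(s-1) π/sin(πs)` (the substitution
`t = xu/(1-u)` makes it `B(s,1-s)`), which gives the `ε^(7/3)` term. Both corrections stay bounded
as `x → 0`: `0 ≤ (1-t)^(β-1) - 1 ≤ t(1-t)^(β-1)` since `β ≤ 1`, and `∫₁^∞ t^(s-2) dt < ∞`.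
-/

open Filter Topology Asymptotics

/-- The Gauss hypergeometric value `₂F₁(1, 7/6; 3/2; −1/ε²)` for `ε > 0`, defined via
Euler's integral representation
`₂F₁(a,b;c;z) = Γ(c)/(Γ(b)Γ(c−b)) ∫₀¹ t^{b−1}(1−t)^{c−b−1}(1−zt)^{−a} dt`
(valid since `Re c > Re b > 0`), with `a = 1`, `b = 7/6`, `c = 3/2`, `z = −1/ε²`. -/
noncomputable def hyp2F1value (ε : ℝ) : ℝ :=
  Real.Gamma (3 / 2) / (Real.Gamma (7 / 6) * Real.Gamma (3 / 2 - 7 / 6)) *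
    ∫ t in (0 : ℝ)..1,
      t ^ ((7 / 6 : ℝ) - 1) * (1 - t) ^ ((3 / 2 : ℝ) - (7 / 6 : ℝ) - 1) *
        (1 + t / ε ^ 2) ^ (-(1 : ℝ))

open MeasureTheory Set Real

theorem ofReal_rpow_mul_one_sub_rpow {a b t : ℝ} (ht0 : 0 ≤ t) (ht1 : t ≤ 1) :
    ((t ^ (a - 1) * (1 - t) ^ (b - 1) : ℝ) : ℂ) =
      (t : ℂ) ^ ((a : ℂ) - 1) * (1 - (t : ℂ)) ^ ((b : ℂ) - 1) := by
  push_cast [Complex.ofReal_cpow ht0, Complex.ofReal_cpow (sub_nonneg.2 ht1)]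
  rfl

theorem integrableOn_rpow_mul_one_sub_rpow {a b : ℝ} (ha : 0 < a) (hb : 0 < b) :
    IntegrableOn (fun t : ℝ => t ^ (a - 1) * (1 - t) ^ (b - 1)) (Ioo 0 1) := by
  have h := (Complex.betaIntegral_convergent (u := a) (v := b) (by simpa) (by simpa)).norm
  rw [intervalIntegrable_iff_integrableOn_Ioo_of_le zero_le_one] at h
  refine h.congr_fun (fun t ht => ?_) measurableSet_Ioo
  dsimp only
  rw [← ofReal_rpow_mul_one_sub_rpow ht.1.le ht.2.le, Complex.norm_of_nonneg
    (mul_nonneg (rpow_nonneg ht.1.le _) (rpow_nonneg (sub_nonneg.2 ht.2.le) _))]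

theorem integral_rpow_mul_one_sub_rpow {a b : ℝ} (ha : 0 < a) (hb : 0 < b) :
    ∫ t in Ioo 0 1, t ^ (a - 1) * (1 - t) ^ (b - 1) = Gamma a * Gamma b / Gamma (a + b) := by
  have h := Complex.betaIntegral_eq_Gamma_mul_div a b (by simpa) (by simpa)
  rw [Complex.betaIntegral, intervalIntegral.integral_of_le zero_le_one,
    integral_Ioc_eq_integral_Ioo, ← setIntegral_congr_fun measurableSet_Ioo
      (fun t ht => ofReal_rpow_mul_one_sub_rpow ht.1.le ht.2.le), integral_complex_ofReal,
    ← Complex.ofReal_add, Complex.Gamma_ofReal, Complex.Gamma_ofReal, Complex.Gamma_ofReal] at h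
  exact_mod_cast h

section Stieltjes

variable {x : ℝ}

theorem image_mul_div_one_sub_Ioo (hx : 0 < x) :
    (fun t : ℝ => x * t / (1 - t)) '' Ioo 0 1 = Ioi 0 := by
  ext u
  constructor
  · rintro ⟨t, ht, rfl⟩
    exact div_pos (mul_pos hx ht.1) (sub_pos.2 ht.2)
  · intro (hu : 0 < u)
    refine ⟨u / (u + x), ⟨by positivity, (div_lt_one (by positivity)).2 (by linarith)⟩, ?_⟩
    have : u + x ≠ 0 := by positivity
    dsimp only
    rw [one_sub_div this, add_sub_cancel_left]
    field_simp

theorem hasDerivAt_mul_div_one_sub {t : ℝ} (ht : t ≠ 1) :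
    HasDerivAt (fun t : ℝ => x * t / (1 - t)) (x / (1 - t) ^ 2) t := by
  have h1t : 1 - t ≠ 0 := sub_ne_zero.2 ht.symm
  exact (((hasDerivAt_id' t).const_mul x).fun_div ((hasDerivAt_id' t).const_sub 1) h1t).congr_deriv
    (by ring)

theorem injOn_mul_div_one_sub (hx : 0 < x) : InjOn (fun t : ℝ => x * t / (1 - t)) (Ioo 0 1) := by
  intro t ht t' ht' h
  have h1 : 1 - t ≠ 0 := (sub_pos.2 ht.2).ne'
  have h2 : 1 - t' ≠ 0 := (sub_pos.2 ht'.2).ne'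
  field_simp at h
  nlinarith

theorem integral_Ioi_eq_integral_Ioo_mul_div_one_sub (hx : 0 < x) (g : ℝ → ℝ) :
    ∫ u in Ioi 0, g u = ∫ t in Ioo 0 1, x / (1 - t) ^ 2 * g (x * t / (1 - t)) := by
  rw [← image_mul_div_one_sub_Ioo hx, integral_image_eq_integral_abs_deriv_smul measurableSet_Ioo
    (fun t ht => (hasDerivAt_mul_div_one_sub ht.2.ne).hasDerivWithinAt) (injOn_mul_div_one_sub hx)]
  refine setIntegral_congr_fun measurableSet_Ioo fun t _ => ?_
  rw [abs_of_nonneg (by positivity), smul_eq_mul]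

theorem integrableOn_Ioi_iff_integrableOn_Ioo_mul_div_one_sub (hx : 0 < x) (g : ℝ → ℝ) :
    IntegrableOn g (Ioi 0) ↔
      IntegrableOn (fun t => x / (1 - t) ^ 2 * g (x * t / (1 - t))) (Ioo 0 1) := by
  rw [← image_mul_div_one_sub_Ioo hx, integrableOn_image_iff_integrableOn_abs_deriv_smul
    measurableSet_Ioo (fun t ht => (hasDerivAt_mul_div_one_sub ht.2.ne).hasDerivWithinAt)
    (injOn_mul_div_one_sub hx)]
  refine integrableOn_congr_fun (fun t _ => ?_) measurableSet_Ioo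
  rw [abs_of_nonneg (by positivity), smul_eq_mul]

variable {s : ℝ}

theorem mul_div_one_sub_sq_mul_rpow_mul_add_inv (hx : 0 < x) {t : ℝ} (ht : t ∈ Ioo 0 1) :
    x / (1 - t) ^ 2 * ((x * t / (1 - t)) ^ (s - 1) * (x * t / (1 - t) + x)⁻¹) =
      x ^ (s - 1) * (t ^ (s - 1) * (1 - t) ^ ((1 - s) - 1)) := by
  have h1t : 0 < 1 - t := sub_pos.2 ht.2
  rw [div_rpow (by nlinarith [ht.1]) h1t.le, mul_rpow hx.le ht.1.le, rpow_sub_one h1t.ne',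
    show 1 - s - 1 = -s by ring, rpow_neg h1t.le]
  have : 0 < (1 - t) ^ s := rpow_pos_of_pos h1t s
  field_simp
  ring

theorem integrableOn_rpow_mul_add_inv (hs0 : 0 < s) (hs1 : s < 1) (hx : 0 < x) :
    IntegrableOn (fun t : ℝ => t ^ (s - 1) * (t + x)⁻¹) (Ioi 0) := by
  rw [integrableOn_Ioi_iff_integrableOn_Ioo_mul_div_one_sub hx]
  refine IntegrableOn.congr_fun
    ((integrableOn_rpow_mul_one_sub_rpow hs0 (sub_pos.2 hs1)).const_mul (x ^ (s - 1)))
    (fun t ht => (mul_div_one_sub_sq_mul_rpow_mul_add_inv hx ht).symm) measurableSet_Ioo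

theorem integral_rpow_mul_add_inv (hs0 : 0 < s) (hs1 : s < 1) (hx : 0 < x) :
    ∫ t in Ioi 0, t ^ (s - 1) * (t + x)⁻¹ = x ^ (s - 1) * (π / sin (π * s)) := by
  rw [integral_Ioi_eq_integral_Ioo_mul_div_one_sub hx, setIntegral_congr_fun measurableSet_Ioo
    (fun t ht => mul_div_one_sub_sq_mul_rpow_mul_add_inv hx ht), integral_const_mul,
    integral_rpow_mul_one_sub_rpow hs0 (sub_pos.2 hs1), add_sub_cancel, Gamma_one, div_one,
    Gamma_mul_Gamma_one_sub]

end Stieltjes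

section Decomposition

variable {s β x : ℝ}

noncomputable def stieltjesRemainder (s β x : ℝ) : ℝ :=
  (∫ t in Ioo 0 1, t ^ (s - 1) * ((1 - t) ^ (β - 1) - 1) * (t + x)⁻¹) -
    ∫ t in Ioi 1, t ^ (s - 1) * (t + x)⁻¹

theorem integrableOn_rpow_mul_one_sub_rpow_mul_add_inv (hs0 : 0 < s) (hβ : 0 < β) (hx : 0 < x) :
    IntegrableOn (fun t : ℝ => t ^ (s - 1) * (1 - t) ^ (β - 1) * (t + x)⁻¹) (Ioo 0 1) :=
  (integrableOn_rpow_mul_one_sub_rpow hs0 hβ).mul_continuousOn_of_subset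
    ((continuousOn_id.add continuousOn_const).inv₀ fun _ ht =>
      (add_pos_of_nonneg_of_pos ht.1 hx).ne')
    measurableSet_Ioo isCompact_Icc Ioo_subset_Icc_self

theorem integral_rpow_mul_one_sub_rpow_mul_add_inv (hs0 : 0 < s) (hs1 : s < 1) (hβ : 0 < β)
    (hx : 0 < x) :
    ∫ t in Ioo 0 1, t ^ (s - 1) * (1 - t) ^ (β - 1) * (t + x)⁻¹ =
      x ^ (s - 1) * (π / sin (π * s)) + stieltjesRemainder s β x := by
  have hP := integrableOn_rpow_mul_add_inv hs0 hs1 hx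
  have hPIoo : IntegrableOn (fun t : ℝ => t ^ (s - 1) * (t + x)⁻¹) (Ioo 0 1) :=
    hP.mono_set fun t ht => ht.1
  have hsplit : ∫ t in Ioi 0, t ^ (s - 1) * (t + x)⁻¹ =
      (∫ t in Ioo 0 1, t ^ (s - 1) * (t + x)⁻¹) + ∫ t in Ioi 1, t ^ (s - 1) * (t + x)⁻¹ := by
    rw [← Ioc_union_Ioi_eq_Ioi zero_le_one, setIntegral_union Ioc_disjoint_Ioi_same
      measurableSet_Ioi (hP.mono_set Ioc_subset_Ioi_self)
      (hP.mono_set (Ioi_subset_Ioi zero_le_one)), integral_Ioc_eq_integral_Ioo]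
  have hdiff : ∫ t in Ioo 0 1, t ^ (s - 1) * ((1 - t) ^ (β - 1) - 1) * (t + x)⁻¹ =
      (∫ t in Ioo 0 1, t ^ (s - 1) * (1 - t) ^ (β - 1) * (t + x)⁻¹) -
        ∫ t in Ioo 0 1, t ^ (s - 1) * (t + x)⁻¹ := by
    rw [← integral_sub (integrableOn_rpow_mul_one_sub_rpow_mul_add_inv hs0 hβ hx) hPIoo]
    exact setIntegral_congr_fun measurableSet_Ioo fun t _ => by ring
  rw [integral_rpow_mul_add_inv hs0 hs1 hx] at hsplit
  rw [stieltjesRemainder, hdiff]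
  linarith

theorem one_sub_rpow_sub_one_sub_one_mem_Icc {t : ℝ} (ht : t ∈ Ioo 0 1) (hβ0 : 0 ≤ β)
    (hβ1 : β ≤ 1) : (1 - t) ^ (β - 1) - 1 ∈ Icc 0 (t * (1 - t) ^ (β - 1)) := by
  have h1t : 0 < 1 - t := sub_pos.2 ht.2
  have hge : 1 ≤ (1 - t) ^ (β - 1) :=
    one_le_rpow_of_pos_of_le_one_of_nonpos h1t (by linarith [ht.1]) (by linarith)
  have hle : (1 - t) * (1 - t) ^ (β - 1) ≤ 1 := by
    rw [rpow_sub_one h1t.ne', mul_div_cancel₀ _ h1t.ne']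
    exact rpow_le_one h1t.le (by linarith [ht.1]) hβ0
  constructor <;> linarith

theorem integral_rpow_mul_one_sub_rpow_sub_one_mul_add_inv_mem_Icc (hs0 : 0 < s) (hβ0 : 0 < β)
    (hβ1 : β ≤ 1) (hx : 0 ≤ x) :
    ∫ t in Ioo 0 1, t ^ (s - 1) * ((1 - t) ^ (β - 1) - 1) * (t + x)⁻¹ ∈
      Icc 0 (Gamma s * Gamma β / Gamma (s + β)) := by
  have hpt : ∀ t ∈ Ioo (0 : ℝ) 1, 0 ≤ t ^ (s - 1) * ((1 - t) ^ (β - 1) - 1) * (t + x)⁻¹ ∧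
      t ^ (s - 1) * ((1 - t) ^ (β - 1) - 1) * (t + x)⁻¹ ≤ t ^ (s - 1) * (1 - t) ^ (β - 1) := by
    intro t ht
    obtain ⟨h0, h1⟩ := one_sub_rpow_sub_one_sub_one_mem_Icc ht hβ0.le hβ1
    have htx : 0 < t + x := by linarith [ht.1]
    have hts : 0 < t ^ (s - 1) := rpow_pos_of_pos ht.1 _
    have hA : 0 ≤ t ^ (s - 1) * (1 - t) ^ (β - 1) :=
      mul_nonneg hts.le (rpow_nonneg (sub_pos.2 ht.2).le _)
    refine ⟨by positivity, ?_⟩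
    calc t ^ (s - 1) * ((1 - t) ^ (β - 1) - 1) * (t + x)⁻¹
        ≤ t ^ (s - 1) * (t * (1 - t) ^ (β - 1)) * (t + x)⁻¹ := by gcongr
      _ = t ^ (s - 1) * (1 - t) ^ (β - 1) * (t / (t + x)) := by ring
      _ ≤ t ^ (s - 1) * (1 - t) ^ (β - 1) * 1 :=
          mul_le_mul_of_nonneg_left ((div_le_one htx).2 (by linarith)) hA
      _ = _ := mul_one _
  rw [← integral_rpow_mul_one_sub_rpow hs0 hβ0]
  exact ⟨setIntegral_nonneg measurableSet_Ioo fun t ht => (hpt t ht).1,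
    integral_mono_of_nonneg (ae_restrict_of_forall_mem measurableSet_Ioo fun t ht => (hpt t ht).1)
      (integrableOn_rpow_mul_one_sub_rpow hs0 hβ0)
      (ae_restrict_of_forall_mem measurableSet_Ioo fun t ht => (hpt t ht).2)⟩

theorem integral_Ioi_one_rpow_mul_add_inv_mem_Icc (hs1 : s < 1) (hx : 0 ≤ x) :
    ∫ t in Ioi 1, t ^ (s - 1) * (t + x)⁻¹ ∈ Icc 0 (1 - s)⁻¹ := by
  have hpt : ∀ t ∈ Ioi (1 : ℝ), 0 ≤ t ^ (s - 1) * (t + x)⁻¹ ∧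
      t ^ (s - 1) * (t + x)⁻¹ ≤ t ^ (s - 2) := by
    intro t (ht : 1 < t)
    have ht0 : 0 < t := one_pos.trans ht
    refine ⟨by positivity, ?_⟩
    calc t ^ (s - 1) * (t + x)⁻¹ ≤ t ^ (s - 1) * t⁻¹ := by gcongr; linarith
      _ = t ^ (s - 2) := by rw [← rpow_neg_one, ← rpow_add ht0]; ring_nf
  have hint : ∫ t in Ioi (1 : ℝ), t ^ (s - 2) = (1 - s)⁻¹ := by
    rw [integral_Ioi_rpow_of_lt (by linarith) one_pos, one_rpow, show s - 2 + 1 = -(1 - s) by ring,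
      div_neg, neg_div, neg_neg, one_div]
  rw [← hint]
  exact ⟨setIntegral_nonneg measurableSet_Ioi fun t ht => (hpt t ht).1,
    integral_mono_of_nonneg (ae_restrict_of_forall_mem measurableSet_Ioi fun t ht => (hpt t ht).1)
      (integrableOn_Ioi_rpow_of_lt (by linarith) one_pos)
      (ae_restrict_of_forall_mem measurableSet_Ioi fun t ht => (hpt t ht).2)⟩

theorem abs_stieltjesRemainder_le (hs0 : 0 < s) (hs1 : s < 1) (hβ0 : 0 < β) (hβ1 : β ≤ 1)
    (hx : 0 ≤ x) :
    |stieltjesRemainder s β x| ≤ Gamma s * Gamma β / Gamma (s + β) + (1 - s)⁻¹ := by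
  obtain ⟨h1, h2⟩ := integral_rpow_mul_one_sub_rpow_sub_one_mul_add_inv_mem_Icc hs0 hβ0 hβ1 hx
  obtain ⟨h3, h4⟩ := integral_Ioi_one_rpow_mul_add_inv_mem_Icc hs1 hx
  rw [stieltjesRemainder, abs_le]
  constructor <;> linarith

theorem integral_rpow_mul_one_sub_rpow_mul_one_add_div_rpow_neg_one (hs0 : 0 < s) (hs1 : s < 1)
    (hβ : 0 < β) (hx : 0 < x) :
    ∫ t in Ioo 0 1, t ^ s * (1 - t) ^ (β - 1) * (1 + t / x) ^ (-1 : ℝ) =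
      Gamma s * Gamma β / Gamma (s + β) * x - π / sin (π * s) * x ^ (s + 1) -
        x ^ 2 * stieltjesRemainder s β x := by
  have hpt : ∀ t ∈ Ioo (0 : ℝ) 1, t ^ s * (1 - t) ^ (β - 1) * (1 + t / x) ^ (-1 : ℝ) =
      x * (t ^ (s - 1) * (1 - t) ^ (β - 1)) -
        x ^ 2 * (t ^ (s - 1) * (1 - t) ^ (β - 1) * (t + x)⁻¹) := by
    intro t ht
    have ht0 : t ≠ 0 := ht.1.ne'
    have hxne : x ≠ 0 := hx.ne'
    have htx : t + x ≠ 0 := by linarith [ht.1]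
    rw [rpow_neg_one, rpow_sub_one ht0, one_add_div hxne, add_comm x t]
    field_simp
    ring
  rw [setIntegral_congr_fun measurableSet_Ioo hpt, integral_sub, integral_const_mul,
    integral_const_mul, integral_rpow_mul_one_sub_rpow hs0 hβ,
    integral_rpow_mul_one_sub_rpow_mul_add_inv hs0 hs1 hβ hx]
  · have hxpow : x ^ 2 * x ^ (s - 1) = x ^ (s + 1) := by
      rw [← rpow_natCast, ← rpow_add hx]
      ring_nf
    linear_combination (-(π / sin (π * s))) * hxpow
  · exact (integrableOn_rpow_mul_one_sub_rpow hs0 hβ).const_mul x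
  · exact (integrableOn_rpow_mul_one_sub_rpow_mul_add_inv hs0 hβ hx).const_mul _

theorem isBigO_integral_rpow_mul_one_sub_rpow_mul_one_add_div_rpow_neg_one (hs0 : 0 < s)
    (hs1 : s < 1) (hβ0 : 0 < β) (hβ1 : β ≤ 1) :
    (fun x => (∫ t in Ioo 0 1, t ^ s * (1 - t) ^ (β - 1) * (1 + t / x) ^ (-1 : ℝ)) -
        (Gamma s * Gamma β / Gamma (s + β) * x - π / sin (π * s) * x ^ (s + 1)))
      =O[𝓝[>] 0] fun x => x ^ 2 := by
  refine IsBigO.of_bound (Gamma s * Gamma β / Gamma (s + β) + (1 - s)⁻¹) ?_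
  filter_upwards [self_mem_nhdsWithin] with x (hx : 0 < x)
  rw [integral_rpow_mul_one_sub_rpow_mul_one_add_div_rpow_neg_one hs0 hs1 hβ0 hx,
    sub_sub_cancel_left, norm_neg, norm_mul, mul_comm, Real.norm_eq_abs]
  exact mul_le_mul_of_nonneg_right (abs_stieltjesRemainder_le hs0 hs1 hβ0 hβ1 hx.le) (norm_nonneg _)

end Decomposition

theorem hyp2F1value_eq_integral_Ioo (ε : ℝ) :
    hyp2F1value ε = Gamma (3 / 2) / (Gamma (7 / 6) * Gamma (1 / 3)) *
      ∫ t in Ioo 0 1,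
        t ^ (1 / 6 : ℝ) * (1 - t) ^ ((1 / 3 : ℝ) - 1) * (1 + t / ε ^ 2) ^ (-1 : ℝ) := by
  rw [hyp2F1value, intervalIntegral.integral_of_le zero_le_one, integral_Ioc_eq_integral_Ioo]
  norm_num

theorem gamma_prefactor_mul_beta_eq_three :
    Gamma (3 / 2) / (Gamma (7 / 6) * Gamma (1 / 3)) *
      (Gamma (1 / 6) * Gamma (1 / 3) / Gamma (1 / 6 + 1 / 3)) = 3 := by
  have h32 : Gamma (3 / 2) = 1 / 2 * Gamma (1 / 2) := by
    rw [show (3 / 2 : ℝ) = 1 / 2 + 1 by norm_num, Gamma_add_one (by norm_num)]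
  have h76 : Gamma (7 / 6) = 1 / 6 * Gamma (1 / 6) := by
    rw [show (7 / 6 : ℝ) = 1 / 6 + 1 by norm_num, Gamma_add_one (by norm_num)]
  rw [h32, h76, show (1 / 6 + 1 / 3 : ℝ) = 1 / 2 by norm_num]
  have := (Gamma_pos_of_pos (by norm_num : (0 : ℝ) < 1 / 6)).ne'
  have := (Gamma_pos_of_pos (by norm_num : (0 : ℝ) < 1 / 3)).ne'
  have := (Gamma_pos_of_pos (by norm_num : (0 : ℝ) < 1 / 2)).ne'
  field_simp
  norm_num

theorem gamma_prefactor_mul_pi_div_sin_eq :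
    Gamma (3 / 2) / (Gamma (7 / 6) * Gamma (1 / 3)) * (π / sin (π * (1 / 6))) =
      -(√π * Gamma (-(1 / 6)) / (2 * Gamma (1 / 3))) := by
  have h32 : Gamma (3 / 2) = √π / 2 := by
    rw [show (3 / 2 : ℝ) = 1 / 2 + 1 by norm_num, Gamma_add_one (by norm_num), Gamma_one_half_eq]
    ring
  have hrefl := Gamma_mul_Gamma_one_sub (-(1 / 6))
  rw [show (1 : ℝ) - -(1 / 6) = 7 / 6 by norm_num, show π * -(1 / 6) = -(π / 6) by ring, sin_neg,
    sin_pi_div_six] at hrefl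
  rw [h32, show π * (1 / 6) = π / 6 by ring, sin_pi_div_six]
  have := (Gamma_pos_of_pos (by norm_num : (0 : ℝ) < 7 / 6)).ne'
  have := (Gamma_pos_of_pos (by norm_num : (0 : ℝ) < 1 / 3)).ne'
  field_simp
  field_simp at hrefl
  linear_combination hrefl

/-- Asymptotic expansion
`₂F₁(1, 7/6; 3/2; −1/ε²) = 3ε² + (√π·Γ(−1/6)/(2Γ(1/3)))·ε^(7/3) + O(ε⁴)` as `ε → 0⁺`. -/
theorem hyp2F1_asymptotic :
    (fun ε : ℝ => hyp2F1value ε -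
        (3 * ε ^ 2 +
          Real.sqrt Real.pi * Real.Gamma (-(1 / 6)) / (2 * Real.Gamma (1 / 3)) *
            ε ^ ((7 : ℝ) / 3)))
      =O[𝓝[>] (0 : ℝ)] fun ε : ℝ => ε ^ 4 := by
  have hsq : Tendsto (fun ε : ℝ => ε ^ 2) (𝓝[>] 0) (𝓝[>] 0) :=
    tendsto_nhdsWithin_iff.2 ⟨((continuous_pow 2).tendsto' 0 0 (by simp)).mono_left
      nhdsWithin_le_nhds, eventually_nhdsWithin_of_forall fun ε (hε : 0 < ε) => pow_pos hε 2⟩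
  have key := ((isBigO_integral_rpow_mul_one_sub_rpow_mul_one_add_div_rpow_neg_one
    (s := 1 / 6) (β := 1 / 3) (by norm_num) (by norm_num) (by norm_num) (by norm_num)).comp_tendsto
    hsq).const_mul_left (Gamma (3 / 2) / (Gamma (7 / 6) * Gamma (1 / 3)))
  refine key.congr' ?_ (Eventually.of_forall fun ε => by simp only [Function.comp]; ring)
  filter_upwards [self_mem_nhdsWithin] with ε (hε : 0 < ε)
  have hpow : (ε ^ 2) ^ (1 / 6 + 1 : ℝ) = ε ^ (7 / 3 : ℝ) := by
    rw [← rpow_natCast_mul hε.le]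
    norm_num
  simp only [Function.comp, hyp2F1value_eq_integral_Ioo, hpow]
  linear_combination
    -ε ^ 2 * gamma_prefactor_mul_beta_eq_three + ε ^ (7 / 3 : ℝ) * gamma_prefactor_mul_pi_div_sin_eq
end
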